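/- For any graph G on n vertices, the fractional matching number satisfies α*'(G) = (1/2)(n - max_{S ⊆ V(G)} (i(G-S) - |S|)), where i(G-S) denotes the number of isolated vertices of the graph obtained by deleting S. -/

import Mathlib

open SimpleGraph Finset

/-- The signless Laplacian matrix `Q(G) = D(G) + A(G)` of a graph. -/
noncomputable def signlessLap {V : Type*} [Fintype V] [DecidableEq V]
    (G : SimpleGraph V) [DecidableRel G.Adj] : Matrix V V ℝ :=
  Matrix.diagonal (fun v => (G.degree v : ℝ)) + G.adjMatrix ℝ

/-- The signless Laplacian spectral radius: the largest eigenvalue of `Q(G)`. -/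
noncomputable def q1 {V : Type*} [Fintype V] [DecidableEq V]
    (G : SimpleGraph V) [DecidableRel G.Adj] : ℝ :=
  sSup (spectrum ℝ (signlessLap G))

/-- `f` is a fractional matching of `G`: it assigns each edge a weight in `[0,1]`
(and `0` to non-edges), with total weight at most `1` at each vertex. -/
def IsFracMatching {V : Type*} [Fintype V] [DecidableEq V]
    (G : SimpleGraph V) [DecidableRel G.Adj] (f : Sym2 V → ℝ) : Prop :=
  (∀ e ∈ G.edgeFinset, 0 ≤ f e ∧ f e ≤ 1) ∧
  (∀ e, e ∉ G.edgeFinset → f e = 0) ∧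
  (∀ v : V, ∑ e ∈ G.incidenceFinset v, f e ≤ 1)

/-- The fractional matching number of `G`. -/
noncomputable def fracMatchNum {V : Type*} [Fintype V] [DecidableEq V]
    (G : SimpleGraph V) [DecidableRel G.Adj] : ℝ :=
  sSup {x : ℝ | ∃ f, IsFracMatching G f ∧ x = ∑ e ∈ G.edgeFinset, f e}

/-- `G` has a fractional perfect matching: a fractional matching of total weight `n/2`. -/
def HasFracPerfectMatching {V : Type*} [Fintype V] [DecidableEq V]
    (G : SimpleGraph V) [DecidableRel G.Adj] : Prop :=
  ∃ f, IsFracMatching G f ∧ ∑ e ∈ G.edgeFinset, f e = (Fintype.card V : ℝ) / 2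

/-- Number of isolated vertices of `G - S`. -/
def isoCount {V : Type*} [Fintype V] [DecidableEq V]
    (G : SimpleGraph V) [DecidableRel G.Adj] (S : Finset V) : ℕ :=
  (Finset.univ.filter (fun v => v ∉ S ∧ ∀ u, G.Adj v u → u ∈ S)).card

/-!
For a fractional matching `f` and any `S`, summing the load of `f` over all vertices gives
`2|f| ≤ n - i(G-S) + |S|`: the vertices that are isolated in `G - S` send all their weight
into `S`, and no more than `|S|` arrives there.

Conversely, let `d = max_S (i(G-S) - |S|)`. For `X ⊆ V`, the set `S = N(X) \ X` leaves every
vertex of `X \ N(X)` isolated, so `|X| - |N(X)| ≤ d`. By the deficiency form of Hall's theorem,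
the bipartite double cover of `G` then has a matching `P` of size at least `n - d`. Giving each
edge `uv` the weight `#(P ∩ {(u, v), (v, u)}) / 2` yields a fractional matching of weight
`|P| / 2`.
-/

theorem Sym2.card_filter_mem_mk {α : Type*} [DecidableEq α] (T : Finset α) {a b : α}
    (hab : a ≠ b) :
    #{v ∈ T | v ∈ s(a, b)} = (if a ∈ T then 1 else 0) + (if b ∈ T then 1 else 0) := by
  simp only [Sym2.mem_iff, Finset.filter_or, Finset.filter_eq']
  rw [Finset.card_union_of_disjoint] <;> split_ifs <;> simp [hab]

theorem Finset.exists_injective_sum_of_card_le_card_biUnion_add {ι α : Type*} [DecidableEq α]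
    (t : ι → Finset α) (d : ℕ) (h : ∀ s : Finset ι, #s ≤ #(s.biUnion t) + d) :
    ∃ g : ι → α ⊕ Fin d, Function.Injective g ∧ ∀ i a, g i = .inl a → a ∈ t i := by
  let t' : ι → Finset (α ⊕ Fin d) := fun i => (t i).map .inl ∪ univ.map .inr
  obtain ⟨g, hg, hgt⟩ := (all_card_le_biUnion_card_iff_exists_injective t').mp fun s => by
    rcases s.eq_empty_or_nonempty with rfl | ⟨i, hi⟩
    · simp
    have : s.biUnion t' = (s.biUnion t).map .inl ∪ univ.map .inr := by
      ext (a | j) <;> simp [t']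
      exact ⟨i, hi⟩
    rw [this, card_union_of_disjoint (by simp [disjoint_left]), card_map, card_map, card_univ,
      Fintype.card_fin]
    exact h s
  refine ⟨g, hg, fun i a hia => ?_⟩
  simpa [t', hia] using hgt i

theorem Finset.exists_matching_of_card_le_card_biUnion_add {ι α : Type*} [Fintype ι] [Fintype α]
    [DecidableEq ι] [DecidableEq α]
    (t : ι → Finset α) (d : ℕ) (h : ∀ s : Finset ι, #s ≤ #(s.biUnion t) + d) :
    ∃ P : Finset (ι × α), (∀ p ∈ P, p.2 ∈ t p.1) ∧
      Set.InjOn Prod.fst (P : Set (ι × α)) ∧ Set.InjOn Prod.snd (P : Set (ι × α)) ∧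
      Fintype.card ι ≤ #P + d := by
  obtain ⟨g, hg, hgt⟩ := exists_injective_sum_of_card_le_card_biUnion_add t d h
  set P : Finset (ι × α) := {p | g p.1 = .inl p.2}
  have mem_P {p : ι × α} : p ∈ P ↔ g p.1 = .inl p.2 := by simp [P]
  refine ⟨P, fun p hp => hgt _ _ (mem_P.mp hp), ?_, ?_, ?_⟩
  · intro p hp q hq hpq
    rw [mem_coe, mem_P] at hp hq
    exact Prod.ext hpq (Sum.inl_injective (hp.symm.trans (hpq ▸ hq)))
  · intro p hp q hq hpq
    rw [mem_coe, mem_P] at hp hq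
    exact Prod.ext (hg (hp.trans (hpq ▸ hq.symm))) hpq
  · have hsub : univ.map ⟨g, hg⟩ ⊆ P.image (Sum.inl ∘ Prod.snd) ∪ univ.map .inr := by
      intro x hx
      obtain ⟨i, -, rfl⟩ := mem_map.mp hx
      rcases hgi : g i with a | j <;> simp [hgi]
      exact ⟨i, mem_P.mpr hgi⟩
    calc Fintype.card ι = #(univ.map ⟨g, hg⟩) := by simp
      _ ≤ #(P.image (Sum.inl ∘ Prod.snd)) + d := by
        simpa using (card_le_card hsub).trans (card_union_le _ _)
      _ ≤ #P + d := by gcongr; exact card_image_le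

section

variable {V : Type*} [Fintype V] [DecidableEq V] {G : SimpleGraph V} [DecidableRel G.Adj]

lemma sum_sum_incidenceFinset_eq (f : Sym2 V → ℝ) (T : Finset V) :
    ∑ v ∈ T, ∑ e ∈ G.incidenceFinset v, f e
      = ∑ e ∈ G.edgeFinset, (#{v ∈ T | v ∈ e} : ℝ) * f e := by
  simp_rw [incidenceFinset_eq_filter, Finset.sum_filter]
  rw [Finset.sum_comm]
  refine Finset.sum_congr rfl fun e _ => ?_
  rw [← Finset.sum_filter, Finset.sum_const, nsmul_eq_mul]

lemma sum_sum_incidenceFinset_eq_two_mul_sum (f : Sym2 V → ℝ) :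
    ∑ v, ∑ e ∈ G.incidenceFinset v, f e = 2 * ∑ e ∈ G.edgeFinset, f e := by
  rw [sum_sum_incidenceFinset_eq, Finset.mul_sum]
  refine Finset.sum_congr rfl fun e he => ?_
  have : ({v | v ∈ e} : Finset V) = e.toFinset := by ext; simp
  rw [this, Sym2.card_toFinset_of_not_isDiag e (G.not_isDiag_of_mem_edgeFinset he)]
  norm_num

lemma card_filter_isolated_mem_le_of_adj (S : Finset V) {a b : V} (hab : G.Adj a b) :
    #{v ∈ {v | v ∉ S ∧ ∀ u, G.Adj v u → u ∈ S} | v ∈ s(a, b)}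
      ≤ #{v ∈ S | v ∈ s(a, b)} := by
  have hba := hab.symm
  simp only [Sym2.card_filter_mem_mk _ hab.ne, Finset.mem_filter, Finset.mem_univ, true_and]
  split_ifs <;> grind

lemma IsFracMatching.two_mul_sum_le {f : Sym2 V → ℝ} (hf : IsFracMatching G f) (S : Finset V) :
    2 * ∑ e ∈ G.edgeFinset, f e ≤ Fintype.card V - isoCount G S + #S := by
  obtain ⟨hf_edge, -, hf_vertex⟩ := hf
  set I : Finset V := {v | v ∉ S ∧ ∀ u, G.Adj v u → u ∈ S}
  set load : V → ℝ := fun v => ∑ e ∈ G.incidenceFinset v, f e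
  have hI : ∑ v ∈ I, load v ≤ ∑ v ∈ S, load v := by
    simp only [load, sum_sum_incidenceFinset_eq]
    refine Finset.sum_le_sum fun e he => mul_le_mul_of_nonneg_right ?_ (hf_edge e he).1
    induction e with
    | _ a b => exact_mod_cast card_filter_isolated_mem_le_of_adj S (G.mem_edgeFinset.mp he)
  have hS : ∑ v ∈ S, load v ≤ #S := by
    simpa using Finset.sum_le_sum fun v (_ : v ∈ S) => hf_vertex v
  have hIc : ∑ v ∈ Iᶜ, load v ≤ #Iᶜ := by
    simpa using Finset.sum_le_sum fun v (_ : v ∈ Iᶜ) => hf_vertex v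
  have hsplit := Finset.sum_add_sum_compl I load
  rw [Finset.card_compl] at hIc
  rw [← sum_sum_incidenceFinset_eq_two_mul_sum, ← hsplit, isoCount]
  push_cast [Finset.card_le_univ] at hIc ⊢
  linarith

lemma isFracMatching_of_nonneg {f : Sym2 V → ℝ} (hf_nonneg : ∀ e, 0 ≤ f e)
    (hf_supp : ∀ e ∉ G.edgeFinset, f e = 0)
    (hf_vertex : ∀ v, ∑ e ∈ G.incidenceFinset v, f e ≤ 1) : IsFracMatching G f := by
  refine ⟨fun e he => ⟨hf_nonneg e, ?_⟩, hf_supp, hf_vertex⟩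
  induction e with
  | _ a b =>
    have ha : s(a, b) ∈ G.incidenceFinset a := by
      simpa [mem_incidenceFinset, incidenceSet] using he
    exact (Finset.single_le_sum (fun e _ => hf_nonneg e) ha).trans (hf_vertex a)

lemma card_filter_mem_incidenceFinset_le_two {P : Finset (V × V)}
    (hfst : Set.InjOn Prod.fst (P : Set (V × V))) (hsnd : Set.InjOn Prod.snd (P : Set (V × V)))
    (v : V) : #{p ∈ P | s(p.1, p.2) ∈ G.incidenceFinset v} ≤ 2 := by
  have hsub : {p ∈ P | s(p.1, p.2) ∈ G.incidenceFinset v}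
      ⊆ {p ∈ P | p.1 = v} ∪ {p ∈ P | p.2 = v} := by
    intro p hp
    simp only [Finset.mem_filter, mem_incidenceFinset] at hp
    rcases Sym2.mem_iff.mp hp.2.2 with rfl | rfl <;> simp [hp.1]
  have hone {g : V × V → V} (hg : Set.InjOn g (P : Set (V × V))) : #{p ∈ P | g p = v} ≤ 1 :=
    Finset.card_le_one.mpr fun p hp q hq => by
      simp only [Finset.mem_filter] at hp hq
      exact hg hp.1 hq.1 (hp.2.trans hq.2.symm)
  calc _ ≤ _ := Finset.card_le_card hsub
    _ ≤ _ := Finset.card_union_le _ _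
    _ ≤ 2 := by linarith [hone hfst, hone hsnd]

lemma exists_isFracMatching_two_mul_sum_eq_card (P : Finset (V × V))
    (hadj : ∀ p ∈ P, G.Adj p.1 p.2)
    (hfst : Set.InjOn Prod.fst (P : Set (V × V))) (hsnd : Set.InjOn Prod.snd (P : Set (V × V))) :
    ∃ f, IsFracMatching G f ∧ 2 * ∑ e ∈ G.edgeFinset, f e = #P := by
  refine ⟨fun e => #{p ∈ P | s(p.1, p.2) = e} / 2,
    isFracMatching_of_nonneg (fun e => by positivity) (fun e he => ?_) (fun v => ?_), ?_⟩
  · have : {p ∈ P | s(p.1, p.2) = e} = ∅ :=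
      Finset.filter_false_of_mem fun p hp hpe => he (hpe ▸ G.mem_edgeFinset.mpr (hadj p hp))
    simp [this]
  · rw [← Finset.sum_div, ← Nat.cast_sum, Finset.sum_card_fiberwise_eq_card_filter]
    have := card_filter_mem_incidenceFinset_le_two (G := G) hfst hsnd v
    rw [div_le_one two_pos]
    exact_mod_cast this
  · rw [← Finset.sum_div, ← Nat.cast_sum, Finset.sum_card_fiberwise_eq_card_filter,
      Finset.filter_true_of_mem fun p hp => G.mem_edgeFinset.mpr (hadj p hp)]
    ring

lemma card_sub_card_biUnion_neighborFinset_le (X : Finset V) :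
    (#X : ℤ) - #(X.biUnion (fun v => G.neighborFinset v))
      ≤ (isoCount G (X.biUnion (fun v => G.neighborFinset v) \ X) : ℤ)
        - #(X.biUnion (fun v => G.neighborFinset v) \ X) := by
  set N := X.biUnion (fun v => G.neighborFinset v)
  have hsub : X \ N ⊆ ({v | v ∉ N \ X ∧ ∀ u, G.Adj v u → u ∈ N \ X} : Finset V) := by
    intro v hv
    simp only [Finset.mem_sdiff, N, Finset.mem_biUnion, mem_neighborFinset, not_exists,
      not_and] at hv
    simp only [Finset.mem_filter, Finset.mem_univ, true_and, Finset.mem_sdiff, N,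
      Finset.mem_biUnion, mem_neighborFinset, not_and, not_not]
    exact ⟨fun _ => hv.1, fun u hu => ⟨⟨v, hv.1, hu⟩, fun huX => hv.2 u huX hu.symm⟩⟩
  have h1 := Finset.card_le_card hsub
  have h2 := Finset.card_sdiff_add_card_inter X N
  have h3 := Finset.card_sdiff_add_card_inter N X
  rw [Finset.inter_comm] at h3
  rw [isoCount]
  omega

lemma exists_isFracMatching_card_sub_le_two_mul_sum (d : ℕ)
    (hd : ∀ S : Finset V, (isoCount G S : ℤ) - #S ≤ d) :
    ∃ f, IsFracMatching G f ∧
      (Fintype.card V : ℝ) - d ≤ 2 * ∑ e ∈ G.edgeFinset, f e := by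
  obtain ⟨P, hadj, hfst, hsnd, hcard⟩ :=
    Finset.exists_matching_of_card_le_card_biUnion_add (fun v => G.neighborFinset v) d fun X => by
      have := (card_sub_card_biUnion_neighborFinset_le X).trans (hd _)
      omega
  obtain ⟨f, hf, hsum⟩ := exists_isFracMatching_two_mul_sum_eq_card P
    (fun p hp => (G.mem_neighborFinset _ _).mp (hadj p hp)) hfst hsnd
  refine ⟨f, hf, ?_⟩
  rw [hsum, sub_le_iff_le_add]
  exact_mod_cast hcard

end

/-- `α*'(G) = (n - max_{S ⊆ V} (i(G-S) - |S|)) / 2`. -/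
theorem fracMatchNum_eq {V : Type*} [Fintype V] [DecidableEq V]
    (G : SimpleGraph V) [DecidableRel G.Adj] :
    fracMatchNum G = ((Fintype.card V : ℝ) -
      ((Finset.univ : Finset (Finset V)).sup' ⟨∅, Finset.mem_univ ∅⟩
        (fun S => (isoCount G S : ℤ) - S.card) : ℤ)) / 2 := by
  obtain ⟨S₀, -, hS₀⟩ := Finset.exists_mem_eq_sup' ⟨∅, Finset.mem_univ ∅⟩
    (fun S => (isoCount G S : ℤ) - S.card)
  set D := (Finset.univ : Finset (Finset V)).sup' ⟨∅, Finset.mem_univ ∅⟩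
    (fun S => (isoCount G S : ℤ) - S.card)
  have hD (S : Finset V) : (isoCount G S : ℤ) - #S ≤ D :=
    Finset.le_sup' (fun S => (isoCount G S : ℤ) - #S) (Finset.mem_univ S)
  have hD_nonneg : 0 ≤ D := (Int.natCast_nonneg _).trans (by simpa using hD ∅)
  have upper {f} (hf : IsFracMatching G f) :
      2 * ∑ e ∈ G.edgeFinset, f e ≤ Fintype.card V - D := by
    have := hf.two_mul_sum_le S₀
    have hS₀' : (D : ℝ) = isoCount G S₀ - #S₀ := by exact_mod_cast hS₀
    linarith
  obtain ⟨f, hf, hlower⟩ := exists_isFracMatching_card_sub_le_two_mul_sum D.toNat fun S => by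
    rw [Int.toNat_of_nonneg hD_nonneg]; exact hD S
  have hD_toNat : ((D.toNat : ℕ) : ℝ) = D := by exact_mod_cast Int.toNat_of_nonneg hD_nonneg
  rw [hD_toNat] at hlower
  refine IsGreatest.csSup_eq ⟨⟨f, hf, by linarith [upper hf]⟩, ?_⟩
  rintro _ ⟨g, hg, rfl⟩
  linarith [upper hg]
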